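/- An element w of a Coxeter group is a product of pairwise distinct simple reflections if and only if ℓ(w) = |supp(w)|, where supp(w) is the set of simple reflections appearing in any reduced word of w. -/

import Mathlib

/-!
Everything rests on one fact: if `s_i` is a right descent of the product of a word `ω`, then `i`
occurs in `ω`. A parity argument (Björner–Brenti's permutation representation of `W` on
`W × ℤ/2`, which counts occurrences of a reflection in right inversion sequences modulo 2) puts
`s_i` into the right inversion sequence of `ω`, so `s_i = u⁻¹ s_j u` for a letter `j` of `ω` and a
product `u` of letters of `ω`. In the Tits geometric representation the reflections `σ_j`, `j ≠ i`,
do not change the `α_i`-coordinate while `σ_i α_i = -α_i`, so every word for `s_i` contains `i`.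

Hence a word with distinct letters never meets a descent and is reduced, and all reduced words of
`w` have the same letters (peel off the last letter, which is a descent). So `ℓ(w) = |supp w|`
exactly when a reduced word of `w` has distinct letters.
-/

namespace Paper
open List

variable {B W : Type*} [DecidableEq B] [Group W] {M : CoxeterMatrix B}

/-- `ω` is a reduced word for `w`. -/
def IsReducedWord (cs : CoxeterSystem M W) (w : W) (ω : List B) : Prop :=
  cs.wordProd ω = w ∧ ω.length = cs.length w

/-- The support of `w`: the set of (indices of) simple reflections appearing in some
reduced word of `w`. -/
def Supp (cs : CoxeterSystem M W) (w : W) : Set B :=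
  {i | ∃ ω, IsReducedWord cs w ω ∧ i ∈ ω}

/-- `w` is a product of pairwise distinct simple reflections. -/
def IsBoolean (cs : CoxeterSystem M W) (w : W) : Prop :=
  ∃ ω : List B, ω.Nodup ∧ cs.wordProd ω = w

/-- Bruhat order, characterized via the subword property. -/
def BruhatLE (cs : CoxeterSystem M W) (u w : W) : Prop :=
  ∃ ω ω' : List B, IsReducedWord cs w ω ∧ ω'.Sublist ω ∧ cs.wordProd ω' = u

/-- `s` occurs (strictly) before `t` in the list `ω`. -/
def PrecedesIn (ω : List B) (s t : B) : Prop :=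
  ∃ i j : Fin ω.length, (i : ℕ) < (j : ℕ) ∧ ω.get i = s ∧ ω.get j = t

end Paper

namespace Module.End

open Real

theorem sin_smul_pow_apply {V : Type*} [AddCommGroup V] [Module ℝ V]
    (f : Module.End ℝ V) {φ : ℝ} {p : V} (hp : f (f p) = (2 * cos φ) • f p - p) (n : ℕ) :
    sin φ • (f ^ n) p = sin (n * φ) • f p - sin ((n - 1) * φ) • p := by
  induction n with
  | zero => simp [neg_mul, sin_neg]
  | succ n ih =>
    have hsin : sin ((n + 1) * φ) = 2 * sin (n * φ) * cos φ - sin ((n - 1) * φ) := by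
      rw [add_mul, sub_mul, one_mul, sin_add, sin_sub]; ring
    rw [pow_succ', Module.End.mul_apply, ← map_smul, ih, map_sub, map_smul, map_smul, hp]
    push_cast
    rw [hsin, add_sub_cancel_right]
    module

theorem pow_apply_eq_self_of_apply_apply {V : Type*} [AddCommGroup V] [Module ℝ V]
    (f : Module.End ℝ V) {m : ℕ} (hm : 3 ≤ m) {p : V}
    (hp : f (f p) = (2 * cos (2 * π / m)) • f p - p) : (f ^ m) p = p := by
  have hsin : sin (2 * π / m) ≠ 0 := by
    have : 2 * π / m < π := by
      rw [div_lt_iff₀ (by positivity)]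
      have h3 : (3 : ℝ) ≤ m := by exact_mod_cast hm
      nlinarith [pi_pos]
    exact (sin_pos_of_pos_of_lt_pi (by positivity) this).ne'
  have h := f.sin_smul_pow_apply hp m
  rw [show (m : ℝ) * (2 * π / m) = 2 * π by field_simp,
    show ((m : ℝ) - 1) * (2 * π / m) = 2 * π - 2 * π / m by field_simp, sin_two_pi,
    sin_two_pi_sub] at h
  exact smul_right_injective V hsin (by simp only [h]; module)

end Module.End

namespace CoxeterMatrix

open Real

variable {B : Type*} (M : CoxeterMatrix B)

/-- For `M a b = 0` (that is, `m = ∞`) the junk value `π / 0 = 0` gives `-cos 0 = -1`, which is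
the correct entry of the Tits form. -/
noncomputable def cosForm (a b : B) : ℝ := -cos (π / M a b)

theorem cosForm_symm (a b : B) : M.cosForm a b = M.cosForm b a := by
  rw [cosForm, cosForm, M.symmetric]

@[simp]
theorem cosForm_self (a : B) : M.cosForm a a = 1 := by
  simp [cosForm]

noncomputable def cosPairing (a : B) : (B →₀ ℝ) →ₗ[ℝ] ℝ :=
  Finsupp.linearCombination ℝ fun b => M.cosForm b a

@[simp]
theorem cosPairing_single (a b : B) : M.cosPairing a (Finsupp.single b 1) = M.cosForm b a := by
  simp [cosPairing]

noncomputable def geomReflection (a : B) : Module.End ℝ (B →₀ ℝ) :=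
  LinearMap.id - (2 • M.cosPairing a).smulRight (Finsupp.single a 1)

theorem geomReflection_apply (a : B) (v : B →₀ ℝ) :
    M.geomReflection a v = v - (2 * M.cosPairing a v) • Finsupp.single a 1 := by
  simp [geomReflection]

theorem geomReflection_apply_of_cosPairing_eq_zero {a : B} {v : B →₀ ℝ}
    (hv : M.cosPairing a v = 0) : M.geomReflection a v = v := by
  simp [geomReflection_apply, hv]

theorem geomReflection_apply_apply_of_ne {a b : B} (hab : a ≠ b) (v : B →₀ ℝ) :
    M.geomReflection a v b = v b := by
  simp [geomReflection_apply, hab]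

theorem geomReflection_single_self (a : B) :
    M.geomReflection a (Finsupp.single a 1) = -Finsupp.single a 1 := by
  rw [geomReflection_apply, cosPairing_single, cosForm_self]
  module

theorem geomReflection_mul_self (a : B) : M.geomReflection a * M.geomReflection a = 1 := by
  refine LinearMap.ext fun v => ?_
  simp only [Module.End.mul_apply, geomReflection_apply, map_sub, map_smul, cosPairing_single,
    cosForm_self, Module.End.one_apply]
  module

section Dihedral

variable {a b : B}

theorem geomReflection_mul_apply_plane (x y : ℝ) :
    (M.geomReflection a * M.geomReflection b)
        (x • Finsupp.single a 1 + y • Finsupp.single b 1) =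
      ((4 * M.cosForm a b ^ 2 - 1) * x + 2 * M.cosForm a b * y) • Finsupp.single a 1 +
        (-(2 * M.cosForm a b) * x - y) • Finsupp.single b 1 := by
  have hba := M.cosForm_symm b a
  simp only [Module.End.mul_apply, geomReflection_apply, map_add, map_sub, map_smul,
    cosPairing_single, cosForm_self, hba]
  module

theorem exists_eq_plane_add_ker (hc : M.cosForm a b ^ 2 ≠ 1) (v : B →₀ ℝ) :
    ∃ (x y : ℝ) (z : B →₀ ℝ), M.cosPairing a z = 0 ∧ M.cosPairing b z = 0 ∧
      v = x • Finsupp.single a 1 + y • Finsupp.single b 1 + z := by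
  set c := M.cosForm a b
  have hba : M.cosForm b a = c := M.cosForm_symm b a
  have hden : 1 - c ^ 2 ≠ 0 := sub_ne_zero.mpr (Ne.symm hc)
  set x := (M.cosPairing a v - c * M.cosPairing b v) / (1 - c ^ 2)
  set y := (M.cosPairing b v - c * M.cosPairing a v) / (1 - c ^ 2)
  refine ⟨x, y, v - x • Finsupp.single a 1 - y • Finsupp.single b 1, ?_, ?_, by abel⟩ <;>
  · simp only [map_sub, map_smul, cosPairing_single, cosForm_self, hba, smul_eq_mul, x, y]
    field_simp
    ring

theorem cosForm_sq_ne_one (h : 2 ≤ M a b) : M.cosForm a b ^ 2 ≠ 1 := by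
  have hpos : 0 < π / M a b := by positivity
  have hlt : π / M a b < π := div_lt_self pi_pos (by exact_mod_cast (by omega : 1 < M a b))
  have := sin_sq_add_cos_sq (π / M a b)
  rw [cosForm, neg_sq]
  nlinarith [sin_pos_of_pos_of_lt_pi hpos hlt]

/-- On the plane `ℝα_a + ℝα_b` the map `σ_a σ_b` has determinant `1` and trace `2 cos (2π / m)`,
so by Cayley–Hamilton its powers follow the recursion of `Module.End.sin_smul_pow_apply`. -/
theorem geomReflection_mul_pow_apply_plane (h : 2 ≤ M a b) (x y : ℝ) :
    ((M.geomReflection a * M.geomReflection b) ^ M a b)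
        (x • Finsupp.single a 1 + y • Finsupp.single b 1) =
      x • Finsupp.single a 1 + y • Finsupp.single b 1 := by
  have hc : M.cosForm a b = -cos (π / M a b) := rfl
  rcases h.eq_or_lt with h2 | h3
  · have hc0 : M.cosForm a b = 0 := by rw [hc, ← h2]; simp
    rw [← h2, pow_two, Module.End.mul_apply, geomReflection_mul_apply_plane,
      geomReflection_mul_apply_plane, hc0]
    module
  · refine Module.End.pow_apply_eq_self_of_apply_apply _ h3 ?_
    have hcos : 2 * cos (2 * π / M a b) = 4 * M.cosForm a b ^ 2 - 2 := by
      rw [hc, mul_div_assoc, cos_two_mul]; ring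
    rw [hcos, geomReflection_mul_apply_plane, geomReflection_mul_apply_plane]
    module

theorem geomReflection_mul_pow_of_ne (hab : a ≠ b) :
    (M.geomReflection a * M.geomReflection b) ^ M a b = 1 := by
  rcases Nat.eq_zero_or_pos (M a b) with h0 | hpos
  · rw [h0, pow_zero]
  have h2 : 2 ≤ M a b := by have := M.off_diagonal a b hab; omega
  refine LinearMap.ext fun v => ?_
  obtain ⟨x, y, z, hza, hzb, rfl⟩ := M.exists_eq_plane_add_ker (M.cosForm_sq_ne_one h2) v
  have hz : (M.geomReflection a * M.geomReflection b) z = z := by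
    rw [Module.End.mul_apply, M.geomReflection_apply_of_cosPairing_eq_zero hzb,
      M.geomReflection_apply_of_cosPairing_eq_zero hza]
  rw [map_add, M.geomReflection_mul_pow_apply_plane h2, Module.End.pow_apply,
    Function.iterate_fixed hz, Module.End.one_apply]

theorem isLiftable_geomReflection : M.IsLiftable M.geomReflection := by
  intro a b
  rcases eq_or_ne a b with rfl | hab
  · rw [M.diagonal, pow_one, geomReflection_mul_self]
  · exact M.geomReflection_mul_pow_of_ne hab

end Dihedral

theorem prod_map_geomReflection_apply_of_notMem {ω : List B} {i : B} (hi : i ∉ ω)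
    (v : B →₀ ℝ) : (ω.map M.geomReflection).prod v i = v i := by
  induction ω with
  | nil => simp
  | cons j ω ih =>
    rw [List.mem_cons, not_or] at hi
    rw [List.map_cons, List.prod_cons, Module.End.mul_apply,
      M.geomReflection_apply_apply_of_ne (Ne.symm hi.1), ih hi.2]

end CoxeterMatrix

namespace CoxeterSystem

open List

variable {B W : Type*} [Group W] {M : CoxeterMatrix B} (cs : CoxeterSystem M W)

local prefix:100 "s" => cs.simple
local prefix:100 "π" => cs.wordProd
local prefix:100 "ris" => cs.rightInvSeq

theorem lift_wordProd {G : Type*} [Monoid G] (f : {f : B → G // M.IsLiftable f}) (ω : List B) :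
    cs.lift f (π ω) = (ω.map f.1).prod := by
  rw [wordProd, map_list_prod, List.map_map]
  congr 1
  exact List.map_congr_left fun i _ => cs.lift_apply_simple f.2 i

theorem alternatingWord_two_mul_succ (i j : B) (n : ℕ) :
    alternatingWord i j (2 * (n + 1)) = i :: j :: alternatingWord i j (2 * n) := by
  rw [show 2 * (n + 1) = 2 * n + 1 + 1 by ring, alternatingWord_succ', alternatingWord_succ']
  simp [parity_simps]

theorem prod_map_alternatingWord_two_mul {G : Type*} [Monoid G] (f : B → G) (i j : B) (n : ℕ) :
    ((alternatingWord i j (2 * n)).map f).prod = (f i * f j) ^ n := by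
  induction n with
  | zero => simp [alternatingWord]
  | succ n ih => simp [alternatingWord_two_mul_succ, ih, pow_succ', mul_assoc]

theorem wordProd_alternatingWord_two_mul (i j : B) (n : ℕ) :
    π (alternatingWord i j (2 * n)) = (s i * s j) ^ n :=
  prod_map_alternatingWord_two_mul _ i j n

theorem rightInvSeq_alternatingWord_two_mul (i j : B) (n : ℕ) :
    ris (alternatingWord i j (2 * n)) =
      ((range (2 * n)).map fun k => s j * (s i * s j) ^ k).reverse := by
  have hinv : ∀ k : ℕ, ((s i * s j) ^ k)⁻¹ = s j * (s i * s j) ^ k * s j := by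
    intro k
    have : s j * (s i * s j) * (s j)⁻¹ = (s i * s j)⁻¹ := by
      simp only [mul_inv_rev, inv_simple, mul_assoc, simple_mul_simple_self, mul_one]
    rw [← inv_pow, ← this, conj_pow, inv_simple]
  induction n with
  | zero => simp [alternatingWord]
  | succ n ih =>
    rw [alternatingWord_two_mul_succ, show 2 * (n + 1) = 2 * n + 1 + 1 by ring, range_succ,
      range_succ, rightInvSeq, rightInvSeq, ih]
    simp only [wordProd_cons, wordProd_alternatingWord_two_mul, map_append, reverse_append,
      map_cons, map_nil, reverse_cons, reverse_nil, nil_append, cons_append, cons.injEq, and_true]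
    constructor
    · rw [mul_inv_rev, inv_simple, hinv, simple_mul_simple_cancel_right,
        show 2 * n + 1 = n + 1 + n by ring, pow_add, pow_succ]
      simp only [mul_assoc]
    · rw [hinv, simple_mul_simple_cancel_right, two_mul, pow_add, mul_assoc]

theorem count_rightInvSeq_braid_cast_eq_zero [DecidableEq W] (i j : B) (t : W) :
    ((ris (alternatingWord i j (2 * M i j))).count t : ZMod 2) = 0 := by
  have hper : ∀ k, s j * (s i * s j) ^ (M i j + k) = s j * (s i * s j) ^ k := by
    intro k
    rw [pow_add, simple_mul_simple_pow, one_mul]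
  rw [rightInvSeq_alternatingWord_two_mul, count_reverse, two_mul, range_add, map_append, map_map]
  simp only [Function.comp_def, hper, count_append, ← two_mul, Nat.cast_mul]
  exact zero_mul _

section Parity

variable [DecidableEq W]

/-- `ε` records, modulo 2, how often the reflection `t` has occurred in a right inversion
sequence. -/
def parityStep (i : B) : Function.End (W × ZMod 2) :=
  fun p => (s i * p.1 * s i, p.2 + if p.1 = s i then 1 else 0)

theorem prod_map_parityStep_apply (ω : List B) (t : W) (ε : ZMod 2) :
    (ω.map cs.parityStep).prod (t, ε) = (π ω * t * (π ω)⁻¹, ε + (ris ω).count t) := by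
  induction ω with
  | nil => simp [Function.End.one_def]
  | cons i ω ih =>
    have hconj : π ω * (t * (π ω)⁻¹) = s i ↔ (π ω)⁻¹ * (s i * π ω) = t := by
      constructor <;> intro h <;> rw [← h] <;> group
    rw [map_cons, prod_cons]
    change cs.parityStep i ((ω.map cs.parityStep).prod (t, ε)) = _
    rw [ih, parityStep]
    simp only [hconj, rightInvSeq, count_cons, beq_iff_eq, Nat.cast_add, Nat.cast_ite, Nat.cast_one,
      Nat.cast_zero, wordProd_cons, mul_inv_rev, inv_simple, mul_assoc, add_assoc]

theorem isLiftable_parityStep : M.IsLiftable cs.parityStep := by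
  intro i j
  rw [← prod_map_alternatingWord_two_mul]
  funext ⟨t, ε⟩
  rw [prod_map_parityStep_apply, wordProd_alternatingWord_two_mul, simple_mul_simple_pow,
    count_rightInvSeq_braid_cast_eq_zero]
  simp [Function.End.one_def]

end Parity

theorem mem_of_wordProd_eq_simple {ω : List B} {i : B} (h : π ω = s i) : i ∈ ω := by
  by_contra hi
  have h' := congrArg (fun w => cs.lift ⟨_, M.isLiftable_geomReflection⟩ w (Finsupp.single i 1) i) h
  simp only [lift_wordProd, cs.lift_apply_simple, M.prod_map_geomReflection_apply_of_notMem hi,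
    M.geomReflection_single_self] at h'
  norm_num at h'

theorem count_rightInvSeq_cast_eq [DecidableEq W] {ω ω' : List B} (h : π ω = π ω') (t : W) :
    ((ris ω).count t : ZMod 2) = (ris ω').count t := by
  have key := congrArg (fun w => (cs.lift ⟨_, cs.isLiftable_parityStep⟩ w (t, 0)).2) h
  simpa only [lift_wordProd, prod_map_parityStep_apply, zero_add] using key

theorem simple_mem_rightInvSeq_of_isRightDescent {ω : List B} {i : B}
    (h : cs.IsRightDescent (π ω) i) : s i ∈ ris ω := by
  classical
  obtain ⟨α, hα, hαω⟩ := cs.exists_isReduced (π ω * s i)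
  have hprod : π (α.concat i) = π ω := by
    rw [wordProd_concat, ← hαω, simple_mul_simple_cancel_right]
  have hred : cs.IsReduced (α.concat i) := by
    rw [IsReduced, hprod, length_concat, ← hα.eq, ← hαω, ← cs.isRightDescent_iff.mp h]
  have hmem : s i ∈ ris (α.concat i) := by
    rw [rightInvSeq_concat, concat_eq_append]
    exact mem_append_right _ (mem_singleton_self _)
  have hodd := cs.count_rightInvSeq_cast_eq hprod (s i)
  rw [count_eq_one_of_mem hred.nodup_rightInvSeq hmem, Nat.cast_one] at hodd
  refine count_pos_iff.mp (Nat.pos_of_ne_zero fun h0 => ?_)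
  rw [h0, Nat.cast_zero] at hodd
  exact one_ne_zero hodd

theorem mem_of_simple_mem_rightInvSeq {ω : List B} {i : B} (h : s i ∈ ris ω) : i ∈ ω := by
  obtain ⟨k, hk, hki⟩ := mem_iff_getElem.mp h
  rw [length_rightInvSeq] at hk
  rw [getElem_rightInvSeq _ _ _ hk, getElem?_eq_getElem hk, Option.map_some,
    Option.getD_some] at hki
  have hword : π ((ω.drop (k + 1)).reverse ++ ω[k] :: ω.drop (k + 1)) = s i := by
    rw [wordProd_append, wordProd_reverse, wordProd_cons, ← hki, mul_assoc]
  have hsub : (ω.drop (k + 1)).reverse ++ ω[k] :: ω.drop (k + 1) ⊆ ω :=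
    append_subset.mpr ⟨reverse_subset.mpr (drop_subset _ _),
      cons_subset.mpr ⟨getElem_mem hk, drop_subset _ _⟩⟩
  exact hsub (cs.mem_of_wordProd_eq_simple hword)

theorem mem_of_isRightDescent {ω : List B} {i : B} (h : cs.IsRightDescent (π ω) i) : i ∈ ω :=
  cs.mem_of_simple_mem_rightInvSeq (cs.simple_mem_rightInvSeq_of_isRightDescent h)

theorem isReduced_of_nodup {ω : List B} (hω : ω.Nodup) : cs.IsReduced ω := by
  induction ω using reverseRecOn with
  | nil => simp [IsReduced]
  | append_singleton α i ih =>
    rw [nodup_append] at hω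
    have hi : ¬cs.IsRightDescent (π α) i := fun h =>
      hω.2.2 i (cs.mem_of_isRightDescent h) i (mem_singleton_self i) rfl
    rw [IsReduced, wordProd_append, wordProd_singleton, cs.not_isRightDescent_iff.mp hi,
      (ih hω.1).eq, length_append, length_singleton]

variable {cs} in
theorem IsReduced.subset_of_wordProd_eq {ω δ : List B} (hω : cs.IsReduced ω)
    (h : π ω = π δ) : ω ⊆ δ := by
  induction ω using reverseRecOn generalizing δ with
  | nil => exact nil_subset δ
  | append_singleton α i ih =>
    have hα : cs.IsReduced α := by simpa using hω.take α.length
    have hδα : π α = π (δ ++ [i]) := by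
      rw [wordProd_append, wordProd_singleton, ← h, wordProd_append, wordProd_singleton,
        simple_mul_simple_cancel_right]
    have hi : i ∈ δ := by
      refine cs.mem_of_isRightDescent ?_
      rw [IsRightDescent, ← h, hω.eq, wordProd_append, wordProd_singleton,
        simple_mul_simple_cancel_right, hα.eq, length_append, length_singleton]
      omega
    have hiδ : [i] ⊆ δ := cons_subset.mpr ⟨hi, nil_subset δ⟩
    exact append_subset.mpr
      ⟨Subset.trans (ih hα hδα) (append_subset.mpr ⟨Subset.refl δ, hiδ⟩), hiδ⟩

end CoxeterSystem

namespace Paper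

section

variable {B W : Type*} [Group W] {M : CoxeterMatrix B} (cs : CoxeterSystem M W)

theorem supp_wordProd {ω : List B} (hω : cs.IsReduced ω) :
    Supp cs (cs.wordProd ω) = {b | b ∈ ω} := by
  ext b
  refine ⟨fun ⟨ω', ⟨hω'π, hω'ℓ⟩, hb⟩ => ?_, fun hb => ⟨ω, ⟨rfl, hω.symm⟩, hb⟩⟩
  have hω' : cs.IsReduced ω' := by rw [CoxeterSystem.IsReduced, hω'π, hω'ℓ]
  exact hω'.subset_of_wordProd_eq hω'π hb

theorem ncard_supp_wordProd [DecidableEq B] {ω : List B} (hω : cs.IsReduced ω) :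
    (Supp cs (cs.wordProd ω)).ncard = ω.toFinset.card := by
  rw [supp_wordProd cs hω, ← List.coe_toFinset, Set.ncard_coe_finset]

end

variable {B W : Type*} [DecidableEq B] [Group W] {M : CoxeterMatrix B}

/-- `w` is a product of pairwise distinct simple reflections iff `ℓ(w) = |supp(w)|`. -/
theorem stmt1 (cs : CoxeterSystem M W) (w : W) :
    IsBoolean cs w ↔ cs.length w = (Supp cs w).ncard := by
  constructor
  · rintro ⟨ω, hnd, rfl⟩
    have hω := cs.isReduced_of_nodup hnd
    rw [ncard_supp_wordProd cs hω, List.toFinset_card_of_nodup hnd, hω.eq]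
  · intro h
    obtain ⟨ω, hω, rfl⟩ := cs.exists_isReduced w
    rw [ncard_supp_wordProd cs hω, hω.eq] at h
    exact ⟨ω, Multiset.toFinset_card_eq_card_iff_nodup.mp h.symm, rfl⟩

end Paper
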